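/- Let d ≥ 1, p ∈ [1,∞] with conjugate exponent p* (1/p + 1/p* = 1), and let C ⊆ ℝ^d be a compact convex set. Let ψ be differentiable on an open convex set containing C and λ-strongly convex with respect to the ℓ_p-norm for some λ > 0. Fix y ∈ C, g ∈ ℝ^d, η > 0, and let y⁺ be a minimizer over z ∈ C of ⟨g, z⟩ + (1/η)·B_ψ(z; y). Then for every v ∈ C, η·⟨g, y − v⟩ ≤ B_ψ(v; y) − B_ψ(v; y⁺) + (η²/(2λ))·‖g‖_{p*}². -/

import Mathlib

open scoped ENNReal RealInnerProductSpace

/-- The ℓ_p norm on `ℝ^d`, for `p ∈ [1, ∞]` (with `‖x‖_∞ = max_i |x i|`). -/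
noncomputable def lpnorm {d : ℕ} (p : ℝ≥0∞) (x : EuclideanSpace ℝ (Fin d)) : ℝ :=
  if p = ∞ then ⨆ i, |x i| else (∑ i, |x i| ^ p.toReal) ^ (1 / p.toReal)

/-- The Bregman divergence `B_ψ(x; y) = ψ(x) - ψ(y) - ⟪∇ψ(y), x - y⟫`. -/
noncomputable def breg {d : ℕ} (ψ : EuclideanSpace ℝ (Fin d) → ℝ)
    (x y : EuclideanSpace ℝ (Fin d)) : ℝ :=
  ψ x - ψ y - ⟪gradient ψ y, x - y⟫

/-!
Optimality of `yp` along the segment towards `v` gives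
`0 ≤ ⟪g, v - yp⟫ + η⁻¹ ⟪∇ψ yp - ∇ψ y, v - yp⟫`, and the three-point identity for Bregman
divergences turns the second term into `B(v; y) - B(v; yp) - B(yp; y)`. The remaining term
`η ⟪g, y - yp⟫` is at most `η ‖g‖_{p*} ‖y - yp‖_p` by Hölder, hence at most
`η² / (2λ) ‖g‖²_{p*} + λ/2 ‖y - yp‖²_p` by Young, and strong convexity absorbs the last summand
into `B(yp; y)`.
-/

theorem Finset.sum_mul_le_iSup_abs_mul_sum_abs {ι : Type*} [Fintype ι] (a b : ι → ℝ) :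
    ∑ i, a i * b i ≤ (⨆ i, |a i|) * ∑ i, |b i| := by
  rw [Finset.mul_sum]
  refine Finset.sum_le_sum fun i _ => ?_
  calc a i * b i ≤ |a i| * |b i| := by rw [← abs_mul]; exact le_abs_self _
    _ ≤ (⨆ j, |a j|) * |b i| := by
      gcongr
      exact le_ciSup (Set.finite_range fun j => |a j|).bddAbove i

section Lpnorm

variable {d : ℕ}

theorem lpnorm_neg (p : ℝ≥0∞) (x : EuclideanSpace ℝ (Fin d)) : lpnorm p (-x) = lpnorm p x := by
  simp only [lpnorm, PiLp.neg_apply, abs_neg]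

theorem inner_le_lpnorm_mul_lpnorm (p q : ℝ≥0∞) [p.HolderConjugate q]
    (g x : EuclideanSpace ℝ (Fin d)) : ⟪g, x⟫ ≤ lpnorm q g * lpnorm p x := by
  have hinner : ⟪g, x⟫ = ∑ i, g i * x i := by
    simp [PiLp.inner_apply, mul_comm]
  rw [hinner]
  rcases eq_or_ne p ∞ with rfl | hp
  · obtain rfl : q = 1 := (ENNReal.HolderConjugate.eq_top_iff_eq_one ∞ q).mp rfl
    simp only [mul_comm (g _), mul_comm (lpnorm 1 g)]
    simpa [lpnorm] using Finset.sum_mul_le_iSup_abs_mul_sum_abs x g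
  rcases eq_or_ne q ∞ with rfl | hq
  · obtain rfl : p = 1 := (ENNReal.HolderConjugate.eq_top_iff_eq_one ∞ p).mp rfl
    simpa [lpnorm] using Finset.sum_mul_le_iSup_abs_mul_sum_abs g x
  · simpa [lpnorm, hp, hq] using Real.inner_le_Lp_mul_Lq Finset.univ (fun i => g i) (fun i => x i)
      (ENNReal.HolderConjugate.toReal_of_ne_top hq hp)

end Lpnorm

section Bregman

variable {d : ℕ} (ψ : EuclideanSpace ℝ (Fin d) → ℝ)

theorem breg_sub_breg_sub_breg (x y z : EuclideanSpace ℝ (Fin d)) :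
    breg ψ x y - breg ψ x z - breg ψ z y = ⟪gradient ψ z - gradient ψ y, x - z⟫ := by
  simp only [breg, inner_sub_left, inner_sub_right]
  ring

variable {ψ}

theorem hasFDerivAt_breg_left {x : EuclideanSpace ℝ (Fin d)} (hψ : DifferentiableAt ℝ ψ x)
    (y : EuclideanSpace ℝ (Fin d)) :
    HasFDerivAt (fun z => breg ψ z y) (fderiv ℝ ψ x - innerSL ℝ (gradient ψ y)) x :=
  (hψ.hasFDerivAt.sub_const (ψ y)).fun_sub
    ((innerSL ℝ (gradient ψ y)).hasFDerivAt.comp x ((hasFDerivAt_id x).sub_const y))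

end Bregman

theorem mul_le_sq_div_add_mul_sq {a b c : ℝ} (hc : 0 < c) :
    a * b ≤ a ^ 2 / (2 * c) + c / 2 * b ^ 2 := by
  have := sq_nonneg (a - c * b)
  field_simp
  nlinarith

theorem IsMinOn.mul_inner_sub_le_breg {d : ℕ} {ψ : EuclideanSpace ℝ (Fin d) → ℝ}
    {C : Set (EuclideanSpace ℝ (Fin d))} (hC : Convex ℝ C) {g y yp v : EuclideanSpace ℝ (Fin d)}
    {η : ℝ} (hη : 0 < η) (hψ : DifferentiableAt ℝ ψ yp) (hyp : yp ∈ C) (hv : v ∈ C)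
    (hmin : IsMinOn (fun z => ⟪g, z⟫ + (1 / η) * breg ψ z y) C yp) :
    η * ⟪g, yp - v⟫ ≤ breg ψ v y - breg ψ v yp - breg ψ yp y := by
  have hF := (innerSL ℝ g).hasFDerivAt.add ((hasFDerivAt_breg_left hψ y).const_mul (1 / η))
  have hfirst := hmin.localize.hasFDerivWithinAt_nonneg hF.hasFDerivWithinAt
    (sub_mem_posTangentConeAt_of_segment_subset (hC.segment_subset hyp hv))
  rw [breg_sub_breg_sub_breg]
  simp only [one_div, add_apply, coe_innerSL_apply, smul_apply, sub_apply, smul_eq_mul,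
    ← inner_gradient_left] at hfirst
  have hscaled := mul_nonneg hη.le hfirst
  rw [mul_add, ← mul_assoc, mul_inv_cancel₀ hη.ne', one_mul] at hscaled
  rw [inner_sub_left, ← neg_sub v yp, inner_neg_right]
  linarith

theorem stmt_3_general (d : ℕ) (p ps : ℝ≥0∞)
    (hconj : 1 / p + 1 / ps = 1)
    (C U : Set (EuclideanSpace ℝ (Fin d)))
    (hCconv : Convex ℝ C)
    (hCU : C ⊆ U)
    (ψ : EuclideanSpace ℝ (Fin d) → ℝ)
    (hdiff : ∀ x ∈ U, DifferentiableAt ℝ ψ x)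
    (lam : ℝ) (hlam : 0 < lam)
    (hsc : ∀ x ∈ U, ∀ w ∈ U,
      ψ w + ⟪gradient ψ w, x - w⟫ + lam / 2 * (lpnorm p (x - w)) ^ 2 ≤ ψ x)
    (y : EuclideanSpace ℝ (Fin d)) (hy : y ∈ C)
    (g : EuclideanSpace ℝ (Fin d)) (η : ℝ) (hη : 0 < η)
    (yp : EuclideanSpace ℝ (Fin d)) (hypC : yp ∈ C)
    (hmin : ∀ z ∈ C, ⟪g, yp⟫ + (1 / η) * breg ψ yp y ≤ ⟪g, z⟫ + (1 / η) * breg ψ z y) :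
    ∀ v ∈ C, η * ⟪g, y - v⟫ ≤
      breg ψ v y - breg ψ v yp + η ^ 2 / (2 * lam) * (lpnorm ps g) ^ 2 := by
  intro v hv
  have : p.HolderConjugate ps :=
    ENNReal.holderConjugate_iff.mpr (by simpa only [one_div] using hconj)
  have hstep : η * ⟪g, yp - v⟫ ≤ breg ψ v y - breg ψ v yp - breg ψ yp y :=
    IsMinOn.mul_inner_sub_le_breg hCconv hη (hdiff yp (hCU hypC)) hypC hv (isMinOn_iff.mpr hmin)
  have hstrong : lam / 2 * lpnorm p (y - yp) ^ 2 ≤ breg ψ yp y := by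
    have := hsc yp (hCU hypC) y (hCU hy)
    rw [← neg_sub, lpnorm_neg, breg]
    linarith
  calc η * ⟪g, y - v⟫ = η * ⟪g, y - yp⟫ + η * ⟪g, yp - v⟫ := by
        rw [← mul_add, ← inner_add_right, sub_add_sub_cancel]
    _ ≤ η * lpnorm ps g * lpnorm p (y - yp) + (breg ψ v y - breg ψ v yp - breg ψ yp y) := by
        rw [mul_assoc]
        gcongr
        exact inner_le_lpnorm_mul_lpnorm p ps g (y - yp)
    _ ≤ (η * lpnorm ps g) ^ 2 / (2 * lam) + lam / 2 * lpnorm p (y - yp) ^ 2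
          + (breg ψ v y - breg ψ v yp - breg ψ yp y) := by
        gcongr
        exact mul_le_sq_div_add_mul_sq hlam
    _ ≤ breg ψ v y - breg ψ v yp + η ^ 2 / (2 * lam) * (lpnorm ps g) ^ 2 := by
        rw [mul_pow, mul_div_right_comm]
        linarith

theorem stmt_3 (d : ℕ) (hd : 1 ≤ d) (p ps : ℝ≥0∞) (hp : 1 ≤ p)
    (hconj : 1 / p + 1 / ps = 1)
    (C U : Set (EuclideanSpace ℝ (Fin d)))
    (hCcomp : IsCompact C) (hCconv : Convex ℝ C)
    (hUopen : IsOpen U) (hUconv : Convex ℝ U) (hCU : C ⊆ U)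
    (ψ : EuclideanSpace ℝ (Fin d) → ℝ)
    (hdiff : ∀ x ∈ U, DifferentiableAt ℝ ψ x)
    (lam : ℝ) (hlam : 0 < lam)
    (hsc : ∀ x ∈ U, ∀ w ∈ U,
      ψ w + ⟪gradient ψ w, x - w⟫ + lam / 2 * (lpnorm p (x - w)) ^ 2 ≤ ψ x)
    (y : EuclideanSpace ℝ (Fin d)) (hy : y ∈ C)
    (g : EuclideanSpace ℝ (Fin d)) (η : ℝ) (hη : 0 < η)
    (yp : EuclideanSpace ℝ (Fin d)) (hypC : yp ∈ C)
    (hmin : ∀ z ∈ C, ⟪g, yp⟫ + (1 / η) * breg ψ yp y ≤ ⟪g, z⟫ + (1 / η) * breg ψ z y) :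
    ∀ v ∈ C, η * ⟪g, y - v⟫ ≤
      breg ψ v y - breg ψ v yp + η ^ 2 / (2 * lam) * (lpnorm ps g) ^ 2 :=
  stmt_3_general d p ps hconj C U hCconv hCU ψ hdiff lam hlam hsc y hy g η hη yp hypC hmin
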